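/- arXiv:2202.02495 — 4 statements merged into one kernel-verified Lean document; each statement's English description precedes it below -/
import Mathlib

section
/- Let 𝐗 = (X, d_X, μ_X) and 𝐘 = (Y, d_Y, μ_Y) be finite metric measure spaces, and let M(𝐗) and M(𝐘) be the MCMSs obtained by equipping them with the constant Markov kernels m^X_x = μ_X and m^Y_y = μ_Y. Then for every integer k ≥ 1, d_GW^(k)(M(𝐗), M(𝐘)) = d_GW^bi(𝐗, 𝐘); in particular, this value is independent of k. -/
open scoped BigOperators NNReal

namespace WLGW

variable {X Y W : Type*}

/-- A probability mass function on a finite type. -/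
def IsPMF [Fintype X] (p : X → ℝ) : Prop :=
  (∀ x, 0 ≤ p x) ∧ ∑ x, p x = 1

/-- `γ` is a coupling of `p` and `q`. -/
def IsCoupling [Fintype X] [Fintype Y] (p : X → ℝ) (q : Y → ℝ) (γ : X → Y → ℝ) : Prop :=
  (∀ x y, 0 ≤ γ x y) ∧ (∀ x, ∑ y, γ x y = p x) ∧ (∀ y, ∑ x, γ x y = q y)

/-- `(m, μ)` is a measure Markov chain: each `m x` is a pmf, and `μ` is a fully supported
stationary pmf. -/
def IsMMC [Fintype X] (m : X → X → ℝ) (μ : X → ℝ) : Prop :=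
  (∀ x, IsPMF (m x)) ∧ IsPMF μ ∧ (∀ x, 0 < μ x) ∧ (∀ x', ∑ x, m x x' * μ x = μ x')

/-- `dX` is a metric on the finite type `X`. -/
def IsMetricOn [Fintype X] (dX : X → X → ℝ) : Prop :=
  (∀ x, dX x x = 0) ∧ (∀ x y, dX x y = dX y x) ∧ (∀ x y, x ≠ y → 0 < dX x y) ∧
    (∀ x y z, dX x z ≤ dX x y + dX y z)

/-- The iterated Weisfeiler–Lehman cost `D_k`. -/
noncomputable def costIter [Fintype X] [Fintype Y] (mX : X → X → ℝ) (mY : Y → Y → ℝ)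
    (D0 : X → Y → ℝ) : ℕ → X → Y → ℝ
  | 0 => D0
  | k + 1 => fun x y => sInf {r : ℝ | ∃ γ : X → Y → ℝ, IsCoupling (mX x) (mY y) γ ∧
      r = ∑ x', ∑ y', costIter mX mY D0 k x' y' * γ x' y'}

/-- The Weisfeiler–Lehman distance of depth `k` between two labeled measure Markov chains. -/
noncomputable def dWL {Z : Type*} [PseudoMetricSpace Z] [Fintype X] [Fintype Y]
    (mX : X → X → ℝ) (μX : X → ℝ) (ℓX : X → Z)
    (mY : Y → Y → ℝ) (μY : Y → ℝ) (ℓY : Y → Z) (k : ℕ) : ℝ :=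
  sInf {r : ℝ | ∃ γ : X → Y → ℝ, IsCoupling μX μY γ ∧
      r = ∑ x, ∑ y, costIter mX mY (fun x y => dist (ℓX x) (ℓY y)) k x y * γ x y}

/-- The absolute Weisfeiler–Lehman distance. -/
noncomputable def dWLsup {Z : Type*} [PseudoMetricSpace Z] [Fintype X] [Fintype Y]
    (mX : X → X → ℝ) (μX : X → ℝ) (ℓX : X → Z)
    (mY : Y → Y → ℝ) (μY : Y → ℝ) (ℓY : Y → Z) : ℝ :=
  ⨆ k : ℕ, dWL mX μX ℓX mY μY ℓY k

/-- Isomorphism of labeled measure Markov chains. -/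
def LMMCIso {Z : Type*} [Fintype X] [Fintype Y]
    (mX : X → X → ℝ) (μX : X → ℝ) (ℓX : X → Z)
    (mY : Y → Y → ℝ) (μY : Y → ℝ) (ℓY : Y → Z) : Prop :=
  ∃ ψ : X ≃ Y, (∀ x, ℓY (ψ x) = ℓX x) ∧ (∀ x x', mY (ψ x) (ψ x') = mX x x') ∧
    (∀ x, μY (ψ x) = μX x)

/-- The `q`-Markov kernel of a finite simple graph. -/
noncomputable def graphKernel {V : Type*} [Fintype V] [DecidableEq V] (G : SimpleGraph V) [DecidableRel G.Adj]
    (q : ℝ) (v v' : V) : ℝ :=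
  if G.degree v = 0 then (if v' = v then 1 else 0)
  else (if v' = v then q else 0) + (if G.Adj v v' then (1 - q) / (G.degree v : ℝ) else 0)

/-- The stationary degree measure of a finite simple graph. -/
noncomputable def graphMu {V : Type*} [Fintype V] (G : SimpleGraph V) [DecidableRel G.Adj]
    (v : V) : ℝ :=
  ((max (G.degree v) 1 : ℕ) : ℝ) / ∑ v', ((max (G.degree v') 1 : ℕ) : ℝ)

/-- The type of depth-`k` Weisfeiler–Lehman labels over an initial label set `Z`. -/
def WLType (Z : Type*) : ℕ → Type _
  | 0 => Z
  | k + 1 => WLType Z k × Multiset (WLType Z k)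

/-- The Weisfeiler–Lehman label hierarchy `ℓ^k` of a labeled graph. -/
def wlLabel {V Z : Type*} [Fintype V] (G : SimpleGraph V) [DecidableRel G.Adj] (ℓ : V → Z) :
    (k : ℕ) → V → WLType Z k
  | 0 => ℓ
  | k + 1 => fun v => (wlLabel G ℓ k v, (G.neighborFinset v).val.map (wlLabel G ℓ k))

/-- The multiset `L_k((G, ℓ))` of depth-`k` WL labels of all vertices. -/
def wlMultiset {V Z : Type*} [Fintype V] (G : SimpleGraph V) [DecidableRel G.Adj]
    (ℓ : V → Z) (k : ℕ) : Multiset (WLType Z k) :=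
  Finset.univ.val.map (wlLabel G ℓ k)

/-- The WL test distinguishes two labeled graphs. -/
def WLDistinguishes {V₁ V₂ Z : Type*} [Fintype V₁] [Fintype V₂]
    (G₁ : SimpleGraph V₁) [DecidableRel G₁.Adj] (ℓ₁ : V₁ → Z)
    (G₂ : SimpleGraph V₂) [DecidableRel G₂.Adj] (ℓ₂ : V₂ → Z) : Prop :=
  ∃ k, wlMultiset G₁ ℓ₁ k ≠ wlMultiset G₂ ℓ₂ k

/-- The relabeling `ℓ^g(v) = g(ℓ(v), deg v, |V|)`. -/
def relabel {V Z Z₁ : Type*} [Fintype V] (G : SimpleGraph V) [DecidableRel G.Adj]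
    (ℓ : V → Z) (g : Z × ℕ × ℕ → Z₁) : V → Z₁ :=
  fun v => g (ℓ v, G.degree v, Fintype.card V)

/-- `kpow m k = m^{⊗k}`, the `k`-step Markov kernel (`kpow m 0` is the identity kernel). -/
def kpow [Fintype X] [DecidableEq X] (m : X → X → ℝ) : ℕ → X → X → ℝ
  | 0 => fun x x' => if x' = x then 1 else 0
  | k + 1 => fun x x'' => ∑ x', kpow m k x' x'' * m x x'

/-- The Wasserstein distance between the pushforwards `(ℓX)_# p` and `(ℓY)_# q`, expressed
through couplings of `p` and `q`. -/
noncomputable def wassersteinCost {Z : Type*} [PseudoMetricSpace Z] [Fintype X] [Fintype Y]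
    (ℓX : X → Z) (ℓY : Y → Z) (p : X → ℝ) (q : Y → ℝ) : ℝ :=
  sInf {r : ℝ | ∃ γ : X → Y → ℝ, IsCoupling p q γ ∧
      r = ∑ x, ∑ y, dist (ℓX x) (ℓY y) * γ x y}

/-- The lower bound `d_WLLB^(k)` for the WL distance. -/
noncomputable def dWLLB {Z : Type*} [PseudoMetricSpace Z] [Fintype X] [Fintype Y]
    [DecidableEq X] [DecidableEq Y]
    (mX : X → X → ℝ) (μX : X → ℝ) (ℓX : X → Z)
    (mY : Y → Y → ℝ) (μY : Y → ℝ) (ℓY : Y → Z) (k : ℕ) : ℝ :=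
  sInf {r : ℝ | ∃ γ : X → Y → ℝ, IsCoupling μX μY γ ∧
      r = ∑ x, ∑ y, wassersteinCost ℓX ℓY (kpow mX k x) (kpow mY k y) * γ x y}

/-- Dimension sequence of an MCNN: `mcnnDim d dims 0 = d`, then `dims`. -/
def mcnnDim (d : ℕ) (dims : ℕ → ℕ) : ℕ → ℕ
  | 0 => d
  | i + 1 => dims i

/-- A `k`-layer Markov chain neural network on `ℝ^d`-LMMCs: Lipschitz maps `φ_1, …, φ_{k+1}`
followed by a continuous map `ψ`. -/
structure MCNN (d k : ℕ) where
  dims : ℕ → ℕ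
  φ : (i : ℕ) → EuclideanSpace ℝ (Fin (mcnnDim d dims i)) →
      EuclideanSpace ℝ (Fin (mcnnDim d dims (i + 1)))
  φ_lip : ∀ i, ∃ K : ℝ≥0, LipschitzWith K (φ i)
  ψ : EuclideanSpace ℝ (Fin (mcnnDim d dims (k + 1))) → ℝ
  ψ_cont : Continuous ψ

/-- Labels after `j` layers of an MCNN (the map `F_{φ_j} ∘ ⋯ ∘ F_{φ_1}`). -/
noncomputable def mcnnLabel {X : Type*} [Fintype X] {d k : ℕ} (N : MCNN d k)
    (m : X → X → ℝ) (ℓ : X → EuclideanSpace ℝ (Fin d)) :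
    (j : ℕ) → X → EuclideanSpace ℝ (Fin (mcnnDim d N.dims j))
  | 0 => ℓ
  | j + 1 => fun x => ∑ x', m x x' • N.φ j (mcnnLabel N m ℓ j x')

/-- Evaluation of an MCNN on an `ℝ^d`-LMMC: `ψ ∘ S_{φ_{k+1}} ∘ F_{φ_k} ∘ ⋯ ∘ F_{φ_1}`. -/
noncomputable def mcnnEval {X : Type*} [Fintype X] {d k : ℕ} (N : MCNN d k)
    (m : X → X → ℝ) (μ : X → ℝ) (ℓ : X → EuclideanSpace ℝ (Fin d)) : ℝ :=
  N.ψ (∑ x, μ x • N.φ k (mcnnLabel N m ℓ k x))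

/-- `k`-step couplings between the Markov kernels `mX` and `mY` (defined for `k ≥ 1`). -/
def IsStepCoupling [Fintype X] [Fintype Y] (mX : X → X → ℝ) (mY : Y → Y → ℝ) :
    ℕ → (X → Y → X → Y → ℝ) → Prop
  | 0, _ => False
  | 1, ν => ∀ x y, IsCoupling (mX x) (mY y) (ν x y)
  | k + 2, ν => ∃ νk ν1 : X → Y → X → Y → ℝ,
      IsStepCoupling mX mY (k + 1) νk ∧ (∀ x y, IsCoupling (mX x) (mY y) (ν1 x y)) ∧
      ν = fun x y x' y' => ∑ x'', ∑ y'', νk x'' y'' x' y' * ν1 x y x'' y''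

/-- The `k`-distortion `dis^(k)(γ, ν)`. -/
def disk [Fintype X] [Fintype Y] (dX : X → X → ℝ) (dY : Y → Y → ℝ)
    (γ : X → Y → ℝ) (ν : X → Y → X → Y → ℝ) : ℝ :=
  ∑ x, ∑ y, ∑ x'', ∑ y'', ∑ x', ∑ y',
    |dX x x' - dY y y'| * ν x'' y'' x' y' * γ x'' y'' * γ x y

/-- The `k`-Gromov–Wasserstein distance between Markov chain metric spaces. -/
noncomputable def dGWk [Fintype X] [Fintype Y]
    (mX : X → X → ℝ) (dX : X → X → ℝ) (μX : X → ℝ)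
    (mY : Y → Y → ℝ) (dY : Y → Y → ℝ) (μY : Y → ℝ) (k : ℕ) : ℝ :=
  sInf {r : ℝ | ∃ (γ : X → Y → ℝ) (ν : X → Y → X → Y → ℝ),
      IsCoupling μX μY γ ∧ IsStepCoupling mX mY k ν ∧ r = disk dX dY γ ν}

/-- The absolute Gromov–Wasserstein distance between MCMSs: `sup_{k ≥ 1} d_GW^(k)`. -/
noncomputable def dGWMCMS [Fintype X] [Fintype Y]
    (mX : X → X → ℝ) (dX : X → X → ℝ) (μX : X → ℝ)
    (mY : Y → Y → ℝ) (dY : Y → Y → ℝ) (μY : Y → ℝ) : ℝ :=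
  ⨆ k : ℕ, dGWk mX dX μX mY dY μY (k + 1)

/-- Isomorphism of Markov chain metric spaces. -/
def MCMSIso [Fintype X] [Fintype Y]
    (mX : X → X → ℝ) (dX : X → X → ℝ) (μX : X → ℝ)
    (mY : Y → Y → ℝ) (dY : Y → Y → ℝ) (μY : Y → ℝ) : Prop :=
  ∃ ψ : X ≃ Y, (∀ x x', dY (ψ x) (ψ x') = dX x x') ∧
    (∀ x x', mY (ψ x) (ψ x') = mX x x') ∧ (∀ x, μY (ψ x) = μX x)

/-- The decoupled Gromov–Wasserstein distance between finite metric measure spaces. -/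
noncomputable def dGWbi [Fintype X] [Fintype Y]
    (dX : X → X → ℝ) (μX : X → ℝ) (dY : Y → Y → ℝ) (μY : Y → ℝ) : ℝ :=
  sInf {r : ℝ | ∃ γ γ' : X → Y → ℝ, IsCoupling μX μY γ ∧ IsCoupling μX μY γ' ∧
      r = ∑ x, ∑ y, ∑ x', ∑ y', |dX x x' - dY y y'| * γ' x' y' * γ x y}

/-- `k`-step couplings between the measures `μX` and `μY`
(`k = 0` gives ordinary couplings). -/
def IsMeasureStepCoupling [Fintype X] [Fintype Y] (mX : X → X → ℝ) (mY : Y → Y → ℝ)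
    (μX : X → ℝ) (μY : Y → ℝ) : ℕ → (X → Y → ℝ) → Prop
  | 0, γ => IsCoupling μX μY γ
  | k + 1, γk => ∃ (γ : X → Y → ℝ) (ν : X → Y → X → Y → ℝ),
      IsCoupling μX μY γ ∧ IsStepCoupling mX mY (k + 1) ν ∧
      γk = fun x' y' => ∑ x, ∑ y, ν x y x' y' * γ x y

/-- The WWL label iteration. -/
noncomputable def wwlLabel {V : Type*} [Fintype V] {d : ℕ} (G : SimpleGraph V)
    [DecidableRel G.Adj] (ℓ : V → EuclideanSpace ℝ (Fin d)) :
    ℕ → V → EuclideanSpace ℝ (Fin d)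
  | 0 => ℓ
  | i + 1 => fun v => (1 / 2 : ℝ) •
      (wwlLabel G ℓ i v + ((G.degree v : ℝ))⁻¹ • ∑ v' ∈ G.neighborFinset v, wwlLabel G ℓ i v')

/-- The stacked WWL label `L^k_G = (ℓ^0, …, ℓ^k)`, valued in Euclidean `ℝ^{d(k+1)}`. -/
noncomputable def stackedLabel {V : Type*} [Fintype V] {d : ℕ} (G : SimpleGraph V)
    [DecidableRel G.Adj] (ℓ : V → EuclideanSpace ℝ (Fin d)) (k : ℕ) (v : V) :
    EuclideanSpace ℝ (Fin (k + 1) × Fin d) :=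
  WithLp.toLp 2 (fun p : Fin (k + 1) × Fin d => wwlLabel G ℓ (p.1 : ℕ) v p.2)

/-! For constant kernels `m^X_x = μX`, `m^Y_y = μY`, every `k`-step coupling `ν` is at each
point `(x, y)` a coupling of `μX` and `μY`, so averaging it against `γ` gives a coupling
`γ' = Σ ν_{x'',y''} γ(x'', y'')` with `dis^(k)(γ, ν) = dis(γ, γ')`. Conversely every pair
`(γ, γ')` arises this way from the constant `k`-step coupling `ν ≡ γ'`. Hence the two infima
range over the same set of values. -/

section ConstantKernel

variable {A B : Type*} [Fintype A] [Fintype B]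

def mix (ν : A → B → X → Y → ℝ) (w : A → B → ℝ) : X → Y → ℝ :=
  fun x y => ∑ a, ∑ b, ν a b x y * w a b

theorem mix_const (γ : X → Y → ℝ) {w : A → B → ℝ} (hw : ∑ a, ∑ b, w a b = 1) :
    mix (fun _ _ => γ) w = γ := by
  funext x y
  simp only [mix, ← Finset.mul_sum, hw, mul_one]

variable [Fintype X] [Fintype Y] {p : X → ℝ} {q : Y → ℝ}

theorem IsCoupling.sum_sum_eq_one {γ : X → Y → ℝ} (hp : IsPMF p) (hγ : IsCoupling p q γ) :
    ∑ x, ∑ y, γ x y = 1 := by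
  simp only [hγ.2.1]
  exact hp.2

theorem isCoupling_mix {ν : A → B → X → Y → ℝ} {w : A → B → ℝ}
    (hν : ∀ a b, IsCoupling p q (ν a b)) (hw : ∀ a b, 0 ≤ w a b)
    (hw₁ : ∑ a, ∑ b, w a b = 1) : IsCoupling p q (mix ν w) := by
  refine ⟨fun x y => ?_, fun x => ?_, fun y => ?_⟩
  · exact Finset.sum_nonneg fun a _ => Finset.sum_nonneg fun b _ =>
      mul_nonneg ((hν a b).1 x y) (hw a b)
  · calc ∑ y, mix ν w x y = ∑ a, ∑ b, (∑ y, ν a b x y) * w a b := by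
          simp only [mix, Finset.sum_mul]
          rw [Finset.sum_comm]
          exact Finset.sum_congr rfl fun _ _ => Finset.sum_comm
      _ = p x := by simp only [fun a b => (hν a b).2.1 x, ← Finset.mul_sum, hw₁, mul_one]
  · calc ∑ x, mix ν w x y = ∑ a, ∑ b, (∑ x, ν a b x y) * w a b := by
          simp only [mix, Finset.sum_mul]
          rw [Finset.sum_comm]
          exact Finset.sum_congr rfl fun _ _ => Finset.sum_comm
      _ = q y := by simp only [fun a b => (hν a b).2.2 y, ← Finset.mul_sum, hw₁, mul_one]

theorem IsStepCoupling.isCoupling_of_const (hp : IsPMF p) :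
    ∀ {k : ℕ} {ν : X → Y → X → Y → ℝ}, IsStepCoupling (fun _ => p) (fun _ => q) k ν →
      ∀ x y, IsCoupling p q (ν x y)
  | 0, _, h => h.elim
  | 1, _, hν => hν
  | _ + 2, _, ⟨_, ν₁, hνk, hν₁, rfl⟩ => fun x y =>
      isCoupling_mix (isCoupling_of_const hp hνk) (hν₁ x y).1 ((hν₁ x y).sum_sum_eq_one hp)

theorem isStepCoupling_const {γ : X → Y → ℝ} (hp : IsPMF p) (hγ : IsCoupling p q γ) :
    ∀ {k : ℕ}, 1 ≤ k → IsStepCoupling (fun _ => p) (fun _ => q) k (fun _ _ => γ)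
  | 1, _ => fun _ _ => hγ
  | k + 2, _ =>
    ⟨fun _ _ => γ, fun _ _ => γ, isStepCoupling_const hp hγ (Nat.le_add_left 1 k),
      fun _ _ => hγ, funext fun _ => funext fun _ => (mix_const γ (hγ.sum_sum_eq_one hp)).symm⟩

theorem disk_eq_sum_mix (dX : X → X → ℝ) (dY : Y → Y → ℝ) (γ : X → Y → ℝ)
    (ν : X → Y → X → Y → ℝ) :
    disk dX dY γ ν = ∑ x, ∑ y, ∑ x', ∑ y', |dX x x' - dY y y'| * mix ν γ x' y' * γ x y := by
  unfold disk mix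
  refine Finset.sum_congr rfl fun x _ => Finset.sum_congr rfl fun y _ => ?_
  calc _ = ∑ p : X × Y, ∑ p' : X × Y,
        |dX x p'.1 - dY y p'.2| * (ν p.1 p.2 p'.1 p'.2 * γ p.1 p.2) * γ x y := by
        simp only [Fintype.sum_prod_type, mul_assoc]
    _ = _ := by
        rw [Finset.sum_comm]
        simp only [Fintype.sum_prod_type, Finset.mul_sum, Finset.sum_mul]

end ConstantKernel

theorem dGWk_const_kernel_general {X Y : Type*} [Fintype X] [Fintype Y]
    (dX : X → X → ℝ) (μX : X → ℝ) (dY : Y → Y → ℝ) (μY : Y → ℝ)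
    (hμX : IsPMF μX)
    (k : ℕ) (hk : 1 ≤ k) :
    dGWk (fun _ x' => μX x') dX μX (fun _ y' => μY y') dY μY k = dGWbi dX μX dY μY := by
  unfold dGWk dGWbi
  congr 1
  ext r
  constructor
  · rintro ⟨γ, ν, hγ, hν, rfl⟩
    exact ⟨γ, mix ν γ, hγ,
      isCoupling_mix (hν.isCoupling_of_const hμX) hγ.1 (hγ.sum_sum_eq_one hμX),
      disk_eq_sum_mix dX dY γ ν⟩
  · rintro ⟨γ, γ', hγ, hγ', rfl⟩
    refine ⟨γ, fun _ _ => γ', hγ, isStepCoupling_const hμX hγ' hk, ?_⟩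
    rw [disk_eq_sum_mix, mix_const γ' (hγ.sum_sum_eq_one hμX)]

theorem dGWk_const_kernel {X Y : Type*} [Fintype X] [Fintype Y]
    (dX : X → X → ℝ) (μX : X → ℝ) (dY : Y → Y → ℝ) (μY : Y → ℝ)
    (hdX : IsMetricOn dX) (hdY : IsMetricOn dY)
    (hμX : IsPMF μX) (hμY : IsPMF μY) (hμXpos : ∀ x, 0 < μX x) (hμYpos : ∀ y, 0 < μY y)
    (k : ℕ) (hk : 1 ≤ k) :
    dGWk (fun _ x' => μX x') dX μX (fun _ y' => μY y') dY μY k = dGWbi dX μX dY μY :=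
  dGWk_const_kernel_general dX μX dY μY hμX k hk

end WLGW
end

section
/- For any MCMSs (𝒳, d_X) and (𝒴, d_Y), define the eccentricity functions ecc_X(x) = Σ_{x'∈X} d_X(x,x') μ_X(x') and ecc_Y(y) = Σ_{y'∈Y} d_Y(y,y') μ_Y(y'). Then for every integer k ≥ 1, every γ ∈ 𝒞(μ_X, μ_Y), and every ν^{(k)} ∈ 𝒞^{(k)}(m^X, m^Y): Σ_{(x,y)} Σ_{(x',y')} |ecc_X(x') − ecc_Y(y')| ν^{(k)}_{x,y}(x',y') γ(x,y) ≤ dis^{(k)}(γ, ν^{(k)}); that is, the eccentricity is a stable label invariant of MCMSs. -/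
open scoped BigOperators NNReal

namespace WLGW

variable {X Y W : Type*}

/-!
Because `γ` has marginals `μ_X` and `μ_Y`, both eccentricities are averages against the same
coupling: `ecc_X x' = ∑ d_X(x, x') γ(x, y)` and `ecc_Y y' = ∑ d_Y(y, y') γ(x, y)`. Hence
`|ecc_X x' - ecc_Y y'| ≤ ∑ |d_X(x, x') - d_Y(y, y')| γ(x, y)`, and integrating this against the
nonnegative weights `ν_{x'',y''}(x', y') γ(x'', y'')` gives `dis^(k)(γ, ν)` after reordering the sums.
-/

theorem IsStepCoupling.nonneg [Fintype X] [Fintype Y] {mX : X → X → ℝ} {mY : Y → Y → ℝ} :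
    ∀ {k : ℕ} {ν : X → Y → X → Y → ℝ}, IsStepCoupling mX mY k ν →
      ∀ x y x' y', 0 ≤ ν x y x' y'
  | 0, _, h, _, _, _, _ => h.elim
  | 1, _, h, x, y, x', y' => (h x y).1 x' y'
  | _ + 2, _, ⟨_, _, hνk, hν1, rfl⟩, x, y, x', y' =>
      Finset.sum_nonneg fun a _ => Finset.sum_nonneg fun b _ =>
        mul_nonneg (hνk.nonneg a b x' y') ((hν1 x y).1 a b)

section Coupling

variable [Fintype X] [Fintype Y] {p : X → ℝ} {q : Y → ℝ} {γ : X → Y → ℝ}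

theorem IsCoupling.sum_mul_left (hγ : IsCoupling p q γ) (f : X → ℝ) :
    ∑ x, f x * p x = ∑ x, ∑ y, f x * γ x y := by
  simp only [← Finset.mul_sum, hγ.2.1]

theorem IsCoupling.sum_mul_right (hγ : IsCoupling p q γ) (g : Y → ℝ) :
    ∑ y, g y * q y = ∑ x, ∑ y, g y * γ x y := by
  rw [Finset.sum_comm]
  simp only [← Finset.mul_sum, hγ.2.2]

theorem IsCoupling.abs_sub_le (hγ : IsCoupling p q γ) (f : X → ℝ) (g : Y → ℝ) :
    |∑ x, f x * p x - ∑ y, g y * q y| ≤ ∑ x, ∑ y, |f x - g y| * γ x y :=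
  calc |∑ x, f x * p x - ∑ y, g y * q y|
      = |∑ x, ∑ y, (f x - g y) * γ x y| := by
        simp only [hγ.sum_mul_left, hγ.sum_mul_right, sub_mul, Finset.sum_sub_distrib]
    _ ≤ ∑ x, ∑ y, |(f x - g y) * γ x y| :=
        (Finset.abs_sum_le_sum_abs _ _).trans
          (Finset.sum_le_sum fun _ _ => Finset.abs_sum_le_sum_abs _ _)
    _ = ∑ x, ∑ y, |f x - g y| * γ x y := by
        simp only [abs_mul, abs_of_nonneg (hγ.1 _ _)]

end Coupling

theorem sum_comm_pair {α β ι κ M : Type*} [AddCommMonoid M] [Fintype α] [Fintype β]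
    [Fintype ι] [Fintype κ] (f : α → β → ι → κ → M) :
    ∑ a, ∑ b, ∑ c, ∑ d, f a b c d = ∑ c, ∑ d, ∑ a, ∑ b, f a b c d :=
  calc ∑ a, ∑ b, ∑ c, ∑ d, f a b c d
      = ∑ p : α × β, ∑ q : ι × κ, f p.1 p.2 q.1 q.2 := by simp only [Fintype.sum_prod_type]
    _ = ∑ q : ι × κ, ∑ p : α × β, f p.1 p.2 q.1 q.2 := Finset.sum_comm
    _ = ∑ c, ∑ d, ∑ a, ∑ b, f a b c d := by simp only [Fintype.sum_prod_type]

def ecc [Fintype X] (dX : X → X → ℝ) (μX : X → ℝ) (x : X) : ℝ :=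
  ∑ x', dX x x' * μX x'

theorem abs_ecc_sub_ecc_le [Fintype X] [Fintype Y] {dX : X → X → ℝ} {dY : Y → Y → ℝ}
    {μX : X → ℝ} {μY : Y → ℝ} {γ : X → Y → ℝ} (hγ : IsCoupling μX μY γ)
    (hdX : ∀ x x', dX x x' = dX x' x) (hdY : ∀ y y', dY y y' = dY y' y) (x' : X) (y' : Y) :
    |ecc dX μX x' - ecc dY μY y'| ≤ ∑ x, ∑ y, |dX x x' - dY y y'| * γ x y := by
  simpa only [ecc, hdX x', hdY y'] using hγ.abs_sub_le (dX x') (dY y')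

theorem disk_eq [Fintype X] [Fintype Y] (dX : X → X → ℝ) (dY : Y → Y → ℝ)
    (γ : X → Y → ℝ) (ν : X → Y → X → Y → ℝ) :
    disk dX dY γ ν = ∑ x, ∑ y, ∑ x', ∑ y',
      (∑ a, ∑ b, |dX a x' - dY b y'| * γ a b) * ν x y x' y' * γ x y := by
  simp only [disk, Finset.sum_mul]
  rw [sum_comm_pair]
  refine Fintype.sum_congr _ _ fun x => Fintype.sum_congr _ _ fun y => ?_
  rw [sum_comm_pair]
  refine Fintype.sum_congr _ _ fun x' => Fintype.sum_congr _ _ fun y' => ?_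
  refine Fintype.sum_congr _ _ fun a => Fintype.sum_congr _ _ fun b => ?_
  ring

theorem ecc_stable_general {X Y : Type*} [Fintype X] [Fintype Y]
    (mX : X → X → ℝ) (dX : X → X → ℝ) (μX : X → ℝ)
    (mY : Y → Y → ℝ) (dY : Y → Y → ℝ) (μY : Y → ℝ)
    (hdX : IsMetricOn dX) (hdY : IsMetricOn dY)
    (k : ℕ)
    (γ : X → Y → ℝ) (hγ : IsCoupling μX μY γ)
    (ν : X → Y → X → Y → ℝ) (hν : IsStepCoupling mX mY k ν) :
    ∑ x, ∑ y, ∑ x', ∑ y',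
        |(∑ x'', dX x' x'' * μX x'') - (∑ y'', dY y' y'' * μY y'')| * ν x y x' y' * γ x y
      ≤ disk dX dY γ ν := by
  rw [disk_eq]
  gcongr with x _ y _ x' _ y' _
  · exact hγ.1 x y
  · exact hν.nonneg x y x' y'
  · exact abs_ecc_sub_ecc_le hγ hdX.2.1 hdY.2.1 x' y'

theorem ecc_stable {X Y : Type*} [Fintype X] [Fintype Y]
    (mX : X → X → ℝ) (dX : X → X → ℝ) (μX : X → ℝ)
    (mY : Y → Y → ℝ) (dY : Y → Y → ℝ) (μY : Y → ℝ)
    (hX : IsMMC mX μX) (hY : IsMMC mY μY)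
    (hdX : IsMetricOn dX) (hdY : IsMetricOn dY)
    (k : ℕ) (hk : 1 ≤ k)
    (γ : X → Y → ℝ) (hγ : IsCoupling μX μY γ)
    (ν : X → Y → X → Y → ℝ) (hν : IsStepCoupling mX mY k ν) :
    ∑ x, ∑ y, ∑ x', ∑ y',
        |(∑ x'', dX x' x'' * μX x'') - (∑ y'', dY y' y'' * μY y'')| * ν x y x' y' * γ x y
      ≤ disk dX dY γ ν :=
  ecc_stable_general mX dX μX mY dY μY hdX hdY k γ hγ ν hν

end WLGW
end

section
/- Let 𝒳 = (X, m^X, μ_X) and 𝒴 = (Y, m^Y, μ_Y) be MMCs. The sets of k-step couplings of μ_X and μ_Y form a decreasing hierarchy: 𝒞^{(0)}(μ_X, μ_Y) ⊇ 𝒞^{(1)}(μ_X, μ_Y) ⊇ 𝒞^{(2)}(μ_X, μ_Y) ⊇ ⋯, that is, 𝒞^{(k+1)}(μ_X, μ_Y) ⊆ 𝒞^{(k)}(μ_X, μ_Y) for every k ≥ 0. -/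
open scoped BigOperators NNReal

namespace WLGW

variable {X Y W : Type*}

/-! A `(k+1)`-step coupling `(νₖ ∘ ν₁) ⊙ γ` of the measures can be regrouped as `νₖ ⊙ (ν₁ ⊙ γ)`,
and `ν₁ ⊙ γ` is again a coupling of `μX` and `μY` because both measures are stationary. -/

theorem isCoupling_sum_mul {X Y : Type*} [Fintype X] [Fintype Y]
    {mX : X → X → ℝ} {mY : Y → Y → ℝ} {p : X → ℝ} {q : Y → ℝ} {γ : X → Y → ℝ}
    {ν : X → Y → X → Y → ℝ} (hγ : IsCoupling p q γ)
    (hν : ∀ x y, IsCoupling (mX x) (mY y) (ν x y)) :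
    IsCoupling (fun x' => ∑ x, mX x x' * p x) (fun y' => ∑ y, mY y y' * q y)
      (fun x' y' => ∑ x, ∑ y, ν x y x' y' * γ x y) := by
  refine ⟨fun x' y' => Finset.sum_nonneg fun x _ => Finset.sum_nonneg fun y _ =>
    mul_nonneg ((hν x y).1 x' y') (hγ.1 x y), fun x' => ?_, fun y' => ?_⟩
  · calc ∑ y', ∑ x, ∑ y, ν x y x' y' * γ x y
        = ∑ x, ∑ y, (∑ y', ν x y x' y') * γ x y := by
          simp only [Finset.sum_mul]
          rw [Finset.sum_comm]
          exact Finset.sum_congr rfl fun _ _ => Finset.sum_comm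
      _ = ∑ x, mX x x' * p x := by
          simp only [(hν _ _).2.1 x', ← Finset.mul_sum, hγ.2.1]
  · calc ∑ x', ∑ x, ∑ y, ν x y x' y' * γ x y
        = ∑ x, ∑ y, (∑ x', ν x y x' y') * γ x y := by
          simp only [Finset.sum_mul]
          rw [Finset.sum_comm]
          exact Finset.sum_congr rfl fun _ _ => Finset.sum_comm
      _ = ∑ y, ∑ x, mY y y' * γ x y := by
          simp only [(hν _ _).2.2 y']
          exact Finset.sum_comm
      _ = ∑ y, mY y y' * q y := by
          simp only [← Finset.mul_sum, hγ.2.2]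

theorem isCoupling_sum_mul_of_stationary {X Y : Type*} [Fintype X] [Fintype Y]
    {mX : X → X → ℝ} {mY : Y → Y → ℝ} {μX : X → ℝ} {μY : Y → ℝ} {γ : X → Y → ℝ}
    {ν : X → Y → X → Y → ℝ} (hμX : ∀ x', ∑ x, mX x x' * μX x = μX x')
    (hμY : ∀ y', ∑ y, mY y y' * μY y = μY y') (hγ : IsCoupling μX μY γ)
    (hν : ∀ x y, IsCoupling (mX x) (mY y) (ν x y)) :
    IsCoupling μX μY (fun x' y' => ∑ x, ∑ y, ν x y x' y' * γ x y) := by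
  simpa only [hμX, hμY] using isCoupling_sum_mul hγ hν

theorem sum_sum_comp_mul_assoc {X Y : Type*} [Fintype X] [Fintype Y]
    (νk ν1 : X → Y → X → Y → ℝ) (γ : X → Y → ℝ) :
    (fun x' y' => ∑ x, ∑ y, (∑ x'', ∑ y'', νk x'' y'' x' y' * ν1 x y x'' y'') * γ x y) =
      fun x' y' => ∑ x'', ∑ y'', νk x'' y'' x' y' * ∑ x, ∑ y, ν1 x y x'' y'' * γ x y := by
  funext x' y'
  simp only [Finset.sum_mul, Finset.mul_sum, mul_assoc]
  simp only [← Fintype.sum_prod_type' (α₁ := X) (α₂ := Y)]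
  rw [Finset.sum_comm]

theorem measure_step_coupling_anti {X Y : Type*} [Fintype X] [Fintype Y]
    (mX : X → X → ℝ) (μX : X → ℝ) (mY : Y → Y → ℝ) (μY : Y → ℝ)
    (hX : IsMMC mX μX) (hY : IsMMC mY μY) (k : ℕ) (γ : X → Y → ℝ)
    (h : IsMeasureStepCoupling mX mY μX μY (k + 1) γ) :
    IsMeasureStepCoupling mX mY μX μY k γ := by
  cases k with
  | zero =>
    obtain ⟨γ₀, ν, hγ₀, hν, rfl⟩ := h
    exact isCoupling_sum_mul_of_stationary hX.2.2.2 hY.2.2.2 hγ₀ hν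
  | succ k =>
    obtain ⟨γ₀, ν, hγ₀, ⟨νk, ν1, hνk, hν1, rfl⟩, rfl⟩ := h
    exact ⟨_, νk, isCoupling_sum_mul_of_stationary hX.2.2.2 hY.2.2.2 hγ₀ hν1, hνk,
      sum_sum_comp_mul_assoc νk ν1 γ₀⟩

end WLGW
end

section
/- The decoupled Gromov–Wasserstein distance d_GW^bi is a legitimate metric on finite metric measure spaces modulo isomorphism: it is nonnegative and symmetric, it satisfies the triangle inequality d_GW^bi(𝐗,𝐘) ≤ d_GW^bi(𝐗,𝐙) + d_GW^bi(𝐙,𝐘) for all finite MMSs 𝐗, 𝐘, 𝐙, and d_GW^bi(𝐗,𝐘) = 0 if and only if 𝐗 and 𝐘 are isomorphic, i.e., there exists a bijective isometry ψ : X → Y with ψ_# μ_X = μ_Y. -/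
/-!
The infimum defining `dGWbi` is attained: couplings form a compact polytope and the cost is
continuous. Symmetry comes from transposing couplings. For the triangle inequality, glue optimal
couplings through `W` by `π(x,w,y) = γ₁(x,w) γ₂(w,y) / μW(w)`; integrating
`|dX - dY| ≤ |dX - dW| + |dW - dY|` against `π' ⊗ π` and pushing forward to `X × W` and `W × Y`
gives the two costs. If the cost of `(γ, γ')` vanishes, then `dX x x' = dY y y'` whenever
`γ x y > 0` and `γ' x' y' > 0`; taking `x = x'` shows that the support of `γ` lies in that of `γ'`,
and then, since `d x x' = 0 ↔ x = x'`, the support of `γ` is the graph of a bijection, which is a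
measure-preserving isometry.
-/

open scoped BigOperators NNReal

namespace WLGW

variable {X Y W : Type*}

section Couplings

variable [Fintype X] [Fintype Y] {p : X → ℝ} {q : Y → ℝ} {γ : X → Y → ℝ}

theorem isCoupling_mul (hp : IsPMF p) (hq : IsPMF q) : IsCoupling p q fun x y => p x * q y :=
  ⟨fun x y => mul_nonneg (hp.1 x) (hq.1 y), fun x => by rw [← Finset.mul_sum, hq.2, mul_one],
    fun y => by rw [← Finset.sum_mul, hp.2, one_mul]⟩

theorem IsCoupling.transpose (h : IsCoupling p q γ) : IsCoupling q p fun y x => γ x y :=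
  ⟨fun y x => h.1 x y, h.2.2, h.2.1⟩

theorem IsCoupling.apply_eq_zero_of_right (h : IsCoupling p q γ) {y : Y} (hy : q y = 0) (x : X) :
    γ x y = 0 := by
  rw [← h.2.2 y, Finset.sum_eq_zero_iff_of_nonneg fun x _ => h.1 x y] at hy
  exact hy x (Finset.mem_univ x)

theorem IsCoupling.exists_pos_left (h : IsCoupling p q γ) {x : X} (hx : 0 < p x) :
    ∃ y, 0 < γ x y := by
  rw [← h.2.1 x, ← Finset.sum_const_zero] at hx
  obtain ⟨y, -, hy⟩ := Finset.exists_lt_of_sum_lt hx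
  exact ⟨y, hy⟩

theorem IsCoupling.exists_pos_right (h : IsCoupling p q γ) {y : Y} (hy : 0 < q y) :
    ∃ x, 0 < γ x y :=
  h.transpose.exists_pos_left hy

theorem isCoupling_pi_single [DecidableEq Y] (ψ : X ≃ Y) (hp : ∀ x, 0 ≤ p x)
    (hψ : ∀ x, q (ψ x) = p x) : IsCoupling p q fun x => Pi.single (ψ x) (p x) := by
  refine ⟨fun x y => ?_, fun x => by simp, fun y => ?_⟩
  · by_cases hy : y = ψ x <;> simp [hy, hp x]
  · simp only [← hψ, Pi.single_apply]
    simp [ψ.sum_comp fun y' => if y = y' then q y' else 0]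

theorem isCompact_setOf_isCoupling (p : X → ℝ) (q : Y → ℝ) :
    IsCompact {γ : X → Y → ℝ | IsCoupling p q γ} := by
  have hbox : IsCompact (Set.univ.pi fun x => Set.univ.pi fun _ : Y => Set.Icc 0 (p x)) :=
    isCompact_univ_pi fun _ => isCompact_univ_pi fun _ => isCompact_Icc
  refine hbox.of_isClosed_subset ?_ fun γ h => ?_
  · simp only [IsCoupling, Set.ofPred_and, Set.ofPred_forall]
    refine .inter (isClosed_iInter fun x => isClosed_iInter fun y =>
      isClosed_le continuous_const (by fun_prop)) (.inter ?_ ?_) <;>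
    exact isClosed_iInter fun _ => isClosed_eq (by fun_prop) continuous_const
  · simp only [Set.mem_pi, Set.mem_univ, Set.mem_Icc, forall_const]
    exact fun x y => ⟨h.1 x y, h.2.1 x ▸ Finset.single_le_sum (fun y _ => h.1 x y)
      (Finset.mem_univ y)⟩

end Couplings

section Pushforward

variable {α β : Type*} [Fintype α] [Fintype β] [DecidableEq β] {g : α → β}
  {π π' : α → ℝ} {ρ ρ' : β → ℝ}

theorem sum_comp_mul_of_fiberwise (hρ : ∀ b, ∑ a with g a = b, π a = ρ b) (f : β → ℝ) :
    ∑ a, f (g a) * π a = ∑ b, f b * ρ b := by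
  rw [← Finset.sum_fiberwise Finset.univ g]
  refine Finset.sum_congr rfl fun b _ => ?_
  rw [← hρ b, Finset.mul_sum]
  refine Finset.sum_congr rfl fun a ha => ?_
  rw [(Finset.mem_filter.1 ha).2]

theorem sum_sum_comp_mul_of_fiberwise (hρ : ∀ b, ∑ a with g a = b, π a = ρ b)
    (hρ' : ∀ b, ∑ a with g a = b, π' a = ρ' b) (c : β → β → ℝ) :
    ∑ a, ∑ a', c (g a) (g a') * π' a' * π a = ∑ b, ∑ b', c b b' * ρ' b' * ρ b := by
  simp_rw [← Finset.sum_mul, sum_comp_mul_of_fiberwise hρ' (c _),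
    sum_comp_mul_of_fiberwise hρ fun b => ∑ b', c b b' * ρ' b']

end Pushforward

section Cost

variable [Fintype X] [Fintype Y]

noncomputable def gwCost (dX : X → X → ℝ) (dY : Y → Y → ℝ) (γ γ' : X → Y → ℝ) : ℝ :=
  ∑ x, ∑ y, ∑ x', ∑ y', |dX x x' - dY y y'| * γ' x' y' * γ x y

variable {dX : X → X → ℝ} {dY : Y → Y → ℝ} {γ γ' : X → Y → ℝ}

theorem gwCost_eq_sum_prod (dX : X → X → ℝ) (dY : Y → Y → ℝ) (γ γ' : X → Y → ℝ) :
    gwCost dX dY γ γ' =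
      ∑ p : X × Y, ∑ p' : X × Y, |dX p.1 p'.1 - dY p.2 p'.2| * γ' p'.1 p'.2 * γ p.1 p.2 := by
  simp only [gwCost, Fintype.sum_prod_type]

theorem gwCost_nonneg (hγ : ∀ x y, 0 ≤ γ x y) (hγ' : ∀ x y, 0 ≤ γ' x y) :
    0 ≤ gwCost dX dY γ γ' := by
  unfold gwCost
  exact Finset.sum_nonneg fun x _ => Finset.sum_nonneg fun y _ => Finset.sum_nonneg fun x' _ =>
    Finset.sum_nonneg fun y' _ => mul_nonneg (mul_nonneg (abs_nonneg _) (hγ' x' y')) (hγ x y)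

theorem gwCost_transpose (dX : X → X → ℝ) (dY : Y → Y → ℝ) (γ γ' : X → Y → ℝ) :
    gwCost dY dX (fun y x => γ x y) (fun y x => γ' x y) = gwCost dX dY γ γ' := by
  unfold gwCost
  rw [Finset.sum_comm]
  refine Finset.sum_congr rfl fun x _ => Finset.sum_congr rfl fun y _ => ?_
  rw [Finset.sum_comm]
  simp only [abs_sub_comm]

theorem continuous_gwCost (dX : X → X → ℝ) (dY : Y → Y → ℝ) :
    Continuous fun γγ' : (X → Y → ℝ) × (X → Y → ℝ) => gwCost dX dY γγ'.1 γγ'.2 := by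
  unfold gwCost
  fun_prop

end Cost

section Gluing

variable [Fintype X] [Fintype Y] [Fintype W] {μX : X → ℝ} {μY : Y → ℝ} {μW : W → ℝ}
  {γ₁ γ₁' : X → W → ℝ} {γ₂ γ₂' : W → Y → ℝ}

-- Where `μW w = 0` both couplings vanish at `w`, so the junk value `_ / 0 = 0` is harmless.
noncomputable def glueTriple (μW : W → ℝ) (γ₁ : X → W → ℝ) (γ₂ : W → Y → ℝ) (t : X × W × Y) :
    ℝ :=
  γ₁ t.1 t.2.1 * γ₂ t.2.1 t.2.2 / μW t.2.1

noncomputable def glue (μW : W → ℝ) (γ₁ : X → W → ℝ) (γ₂ : W → Y → ℝ) (x : X) (y : Y) : ℝ :=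
  ∑ w, glueTriple μW γ₁ γ₂ (x, w, y)

theorem glueTriple_nonneg (h₁ : IsCoupling μX μW γ₁) (h₂ : IsCoupling μW μY γ₂)
    (t : X × W × Y) : 0 ≤ glueTriple μW γ₁ γ₂ t :=
  div_nonneg (mul_nonneg (h₁.1 _ _) (h₂.1 _ _))
    (h₂.2.1 t.2.1 ▸ Finset.sum_nonneg fun y _ => h₂.1 _ y)

theorem sum_glueTriple_right (h₁ : IsCoupling μX μW γ₁) (h₂ : IsCoupling μW μY γ₂) (x : X)
    (w : W) : ∑ y, glueTriple μW γ₁ γ₂ (x, w, y) = γ₁ x w := by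
  simp only [glueTriple, ← Finset.sum_div, ← Finset.mul_sum, h₂.2.1 w]
  by_cases hw : μW w = 0
  · simp [hw, h₁.apply_eq_zero_of_right hw]
  · field_simp

theorem sum_glueTriple_left (h₁ : IsCoupling μX μW γ₁) (h₂ : IsCoupling μW μY γ₂) (w : W)
    (y : Y) : ∑ x, glueTriple μW γ₁ γ₂ (x, w, y) = γ₂ w y := by
  simp only [glueTriple, ← Finset.sum_div, ← Finset.sum_mul, h₁.2.2 w]
  by_cases hw : μW w = 0
  · simp [hw, h₂.transpose.apply_eq_zero_of_right hw]
  · field_simp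

theorem IsCoupling.glue (h₁ : IsCoupling μX μW γ₁) (h₂ : IsCoupling μW μY γ₂) :
    IsCoupling μX μY (glue μW γ₁ γ₂) := by
  refine ⟨fun x y => Finset.sum_nonneg fun w _ => glueTriple_nonneg h₁ h₂ _, fun x => ?_,
    fun y => ?_⟩ <;> simp only [WLGW.glue] <;> rw [Finset.sum_comm]
  · simp only [sum_glueTriple_right h₁ h₂, h₁.2.1]
  · simp only [sum_glueTriple_left h₁ h₂, h₂.2.2]

theorem sum_glueTriple_fiber_XW [DecidableEq X] [DecidableEq W] (h₁ : IsCoupling μX μW γ₁)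
    (h₂ : IsCoupling μW μY γ₂) (b : X × W) :
    ∑ t with (t.1, t.2.1) = b, glueTriple μW γ₁ γ₂ t = γ₁ b.1 b.2 := by
  rw [← sum_glueTriple_right h₁ h₂]
  simp only [Prod.ext_iff, Finset.sum_filter, ite_and, Fintype.sum_prod_type,
    Finset.sum_ite_irrel, Finset.sum_const_zero, Finset.sum_ite_eq', Finset.mem_univ, ↓reduceIte]
  rw [Finset.sum_comm]
  simp

theorem sum_glueTriple_fiber_WY [DecidableEq W] [DecidableEq Y] (h₁ : IsCoupling μX μW γ₁)
    (h₂ : IsCoupling μW μY γ₂) (b : W × Y) :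
    ∑ t with (t.2.1, t.2.2) = b, glueTriple μW γ₁ γ₂ t = γ₂ b.1 b.2 := by
  simp [Finset.sum_filter, Fintype.sum_prod_type, Prod.ext_iff, ite_and,
    sum_glueTriple_left h₁ h₂]

theorem sum_glueTriple_fiber_XY [DecidableEq X] [DecidableEq Y] (b : X × Y) :
    ∑ t with (t.1, t.2.2) = b, glueTriple μW γ₁ γ₂ t = glue μW γ₁ γ₂ b.1 b.2 := by
  simp [Finset.sum_filter, Fintype.sum_prod_type, Prod.ext_iff, ite_and, glue]

theorem gwCost_glue_le (dX : X → X → ℝ) (dW : W → W → ℝ) (dY : Y → Y → ℝ)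
    (h₁ : IsCoupling μX μW γ₁) (h₁' : IsCoupling μX μW γ₁') (h₂ : IsCoupling μW μY γ₂)
    (h₂' : IsCoupling μW μY γ₂') :
    gwCost dX dY (glue μW γ₁ γ₂) (glue μW γ₁' γ₂') ≤
      gwCost dX dW γ₁ γ₁' + gwCost dW dY γ₂ γ₂' := by
  classical
  set π := glueTriple μW γ₁ γ₂
  set π' := glueTriple μW γ₁' γ₂'
  calc gwCost dX dY (glue μW γ₁ γ₂) (glue μW γ₁' γ₂')
      = ∑ t, ∑ t', |dX t.1 t'.1 - dY t.2.2 t'.2.2| * π' t' * π t := by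
        rw [gwCost_eq_sum_prod]
        exact (sum_sum_comp_mul_of_fiberwise sum_glueTriple_fiber_XY sum_glueTriple_fiber_XY
          fun p p' => |dX p.1 p'.1 - dY p.2 p'.2|).symm
    _ ≤ ∑ t, ∑ t', (|dX t.1 t'.1 - dW t.2.1 t'.2.1| + |dW t.2.1 t'.2.1 - dY t.2.2 t'.2.2|) *
          π' t' * π t := by
        gcongr with t _ t' _
        · exact glueTriple_nonneg h₁ h₂ t
        · exact glueTriple_nonneg h₁' h₂' t'
        · exact abs_sub_le _ _ _
    _ = gwCost dX dW γ₁ γ₁' + gwCost dW dY γ₂ γ₂' := by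
        simp only [add_mul, Finset.sum_add_distrib, gwCost_eq_sum_prod]
        rw [sum_sum_comp_mul_of_fiberwise (sum_glueTriple_fiber_XW h₁ h₂)
            (sum_glueTriple_fiber_XW h₁' h₂') fun p p' => |dX p.1 p'.1 - dW p.2 p'.2|,
          sum_sum_comp_mul_of_fiberwise (sum_glueTriple_fiber_WY h₁ h₂)
            (sum_glueTriple_fiber_WY h₁' h₂') fun p p' => |dW p.1 p'.1 - dY p.2 p'.2|]

end Gluing

theorem IsMetricOn.eq_zero_iff [Fintype X] {d : X → X → ℝ} (hd : IsMetricOn d) {x x' : X} :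
    d x x' = 0 ↔ x = x' :=
  ⟨fun h => by_contra fun hne => (hd.2.2.1 x x' hne).ne' h, fun h => h ▸ hd.1 x⟩

section Distance

variable [Fintype X] [Fintype Y] [Fintype W] {dX : X → X → ℝ} {dY : Y → Y → ℝ}
  {dW : W → W → ℝ} {μX : X → ℝ} {μY : Y → ℝ} {μW : W → ℝ} {γ γ' : X → Y → ℝ}

theorem gwCost_pi_single [DecidableEq Y] (ψ : X → Y) (p : X → ℝ) :
    gwCost dX dY (fun x => Pi.single (ψ x) (p x)) (fun x => Pi.single (ψ x) (p x)) =
      ∑ x, ∑ x', |dX x x' - dY (ψ x) (ψ x')| * p x' * p x := by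
  simp [gwCost, Pi.single_apply, mul_ite, ite_mul]

theorem dGWbi_le_gwCost (hγ : IsCoupling μX μY γ) (hγ' : IsCoupling μX μY γ') :
    dGWbi dX μX dY μY ≤ gwCost dX dY γ γ' :=
  csInf_le ⟨0, by rintro r ⟨η, η', hη, hη', rfl⟩; exact gwCost_nonneg hη.1 hη'.1⟩
    ⟨γ, γ', hγ, hγ', rfl⟩

theorem exists_gwCost_eq_dGWbi (hμX : IsPMF μX) (hμY : IsPMF μY) :
    ∃ γ γ', IsCoupling μX μY γ ∧ IsCoupling μX μY γ' ∧
      gwCost dX dY γ γ' = dGWbi dX μX dY μY := by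
  set C := {γ : X → Y → ℝ | IsCoupling μX μY γ}
  have hne : (C ×ˢ C).Nonempty := ⟨(_, _), isCoupling_mul hμX hμY, isCoupling_mul hμX hμY⟩
  obtain ⟨⟨γ, γ'⟩, ⟨hγ, hγ'⟩, hmin⟩ :=
    ((isCompact_setOf_isCoupling μX μY).prod (isCompact_setOf_isCoupling μX μY)).exists_isMinOn
      hne (continuous_gwCost dX dY).continuousOn
  refine ⟨γ, γ', hγ, hγ',
    le_antisymm (le_csInf ⟨_, γ, γ', hγ, hγ', rfl⟩ ?_) (dGWbi_le_gwCost hγ hγ')⟩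
  rintro r ⟨η, η', hη, hη', rfl⟩
  exact isMinOn_iff.1 hmin (η, η') ⟨hη, hη'⟩

theorem dGWbi_comm (hμX : IsPMF μX) (hμY : IsPMF μY) :
    dGWbi dX μX dY μY = dGWbi dY μY dX μX := by
  obtain ⟨γ, γ', hγ, hγ', hXY⟩ := exists_gwCost_eq_dGWbi (dX := dX) (dY := dY) hμX hμY
  obtain ⟨η, η', hη, hη', hYX⟩ := exists_gwCost_eq_dGWbi (dX := dY) (dY := dX) hμY hμX
  refine le_antisymm ?_ ?_
  · exact hYX ▸ gwCost_transpose dY dX η η' ▸ dGWbi_le_gwCost hη.transpose hη'.transpose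
  · exact hXY ▸ gwCost_transpose dX dY γ γ' ▸ dGWbi_le_gwCost hγ.transpose hγ'.transpose

theorem dGWbi_triangle (hμX : IsPMF μX) (hμY : IsPMF μY) (hμW : IsPMF μW) :
    dGWbi dX μX dY μY ≤ dGWbi dX μX dW μW + dGWbi dW μW dY μY := by
  obtain ⟨γ₁, γ₁', h₁, h₁', hXW⟩ := exists_gwCost_eq_dGWbi (dX := dX) (dY := dW) hμX hμW
  obtain ⟨γ₂, γ₂', h₂, h₂', hWY⟩ := exists_gwCost_eq_dGWbi (dX := dW) (dY := dY) hμW hμY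
  calc dGWbi dX μX dY μY ≤ gwCost dX dY (glue μW γ₁ γ₂) (glue μW γ₁' γ₂') :=
        dGWbi_le_gwCost (h₁.glue h₂) (h₁'.glue h₂')
    _ ≤ gwCost dX dW γ₁ γ₁' + gwCost dW dY γ₂ γ₂' := gwCost_glue_le dX dW dY h₁ h₁' h₂ h₂'
    _ = dGWbi dX μX dW μW + dGWbi dW μW dY μY := by rw [hXW, hWY]

theorem dist_eq_of_gwCost_eq_zero (hγ : ∀ x y, 0 ≤ γ x y) (hγ' : ∀ x y, 0 ≤ γ' x y)
    (h0 : gwCost dX dY γ γ' = 0) {x x' : X} {y y' : Y} (hxy : 0 < γ x y)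
    (hxy' : 0 < γ' x' y') : dX x x' = dY y y' := by
  have hterm : ∀ p p' : X × Y,
      0 ≤ |dX p.1 p'.1 - dY p.2 p'.2| * γ' p'.1 p'.2 * γ p.1 p.2 := fun p p' =>
    mul_nonneg (mul_nonneg (abs_nonneg _) (hγ' _ _)) (hγ _ _)
  rw [gwCost_eq_sum_prod, Finset.sum_eq_zero_iff_of_nonneg fun p _ =>
    Finset.sum_nonneg fun p' _ => hterm p p'] at h0
  have := (Finset.sum_eq_zero_iff_of_nonneg fun p' _ => hterm (x, y) p').1
    (h0 (x, y) (Finset.mem_univ _)) (x', y') (Finset.mem_univ _)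
  simpa [hxy.ne', hxy'.ne', sub_eq_zero] using this

theorem exists_equiv_of_isCoupling (hγ : IsCoupling μX μY γ) (hμX : ∀ x, 0 < μX x)
    (hμY : ∀ y, 0 < μY y)
    (hsupp : ∀ x y x' y', 0 < γ x y → 0 < γ x' y' → (x = x' ↔ y = y')) :
    ∃ ψ : X ≃ Y, (∀ x, 0 < γ x (ψ x)) ∧ ∀ x, μY (ψ x) = μX x := by
  choose ψ hψ using fun x => hγ.exists_pos_left (hμX x)
  choose φ hφ using fun y => hγ.exists_pos_right (hμY y)
  have hvanish : ∀ x y x' y', 0 < γ x y → ¬(x = x' ↔ y = y') → γ x' y' = 0 :=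
    fun x y x' y' h hne => le_antisymm (not_lt.1 fun h' => hne (hsupp x y x' y' h h'))
      (hγ.1 x' y')
  refine ⟨⟨ψ, φ, fun x => ((hsupp _ _ _ _ (hφ (ψ x)) (hψ x)).2 rfl),
    fun y => (hsupp _ _ _ _ (hψ (φ y)) (hφ y)).1 rfl⟩, hψ, fun x => ?_⟩
  calc μY (ψ x) = γ x (ψ x) := by
        rw [← hγ.2.2, Fintype.sum_eq_single x fun x' hx' =>
          hvanish x (ψ x) x' (ψ x) (hψ x) (by simp [Ne.symm hx'])]
    _ = μX x := by
        rw [← hγ.2.1, Fintype.sum_eq_single (ψ x) fun y hy =>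
          hvanish x (ψ x) x y (hψ x) (by simp [Ne.symm hy])]

theorem exists_iso_of_gwCost_eq_zero (hdX : IsMetricOn dX) (hdY : IsMetricOn dY)
    (hμX : ∀ x, 0 < μX x) (hμY : ∀ y, 0 < μY y) (hγ : IsCoupling μX μY γ)
    (hγ' : IsCoupling μX μY γ') (h0 : gwCost dX dY γ γ' = 0) :
    ∃ ψ : X ≃ Y, (∀ x x', dY (ψ x) (ψ x') = dX x x') ∧ ∀ x, μY (ψ x) = μX x := by
  have hsub : ∀ x y, 0 < γ x y → 0 < γ' x y := by
    intro x y hxy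
    obtain ⟨y', hy'⟩ := hγ'.exists_pos_left (hμX x)
    have : dY y y' = 0 := (dist_eq_of_gwCost_eq_zero hγ.1 hγ'.1 h0 hxy hy').symm.trans (hdX.1 x)
    rwa [hdY.eq_zero_iff.1 this]
  have hdist : ∀ {x x' y y'}, 0 < γ x y → 0 < γ x' y' → dX x x' = dY y y' :=
    fun hxy hxy' => dist_eq_of_gwCost_eq_zero hγ.1 hγ'.1 h0 hxy (hsub _ _ hxy')
  obtain ⟨ψ, hψ, hμ⟩ := exists_equiv_of_isCoupling hγ hμX hμY fun x y x' y' h h' => by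
    rw [← hdX.eq_zero_iff, ← hdY.eq_zero_iff, hdist h h']
  exact ⟨ψ, fun x x' => (hdist (hψ x) (hψ x')).symm, hμ⟩

end Distance

theorem dGWbi_metric_general {X Y W : Type*} [Fintype X] [Fintype Y] [Fintype W]
    (dX : X → X → ℝ) (μX : X → ℝ) (dY : Y → Y → ℝ) (μY : Y → ℝ)
    (dW : W → W → ℝ) (μW : W → ℝ)
    (hdX : IsMetricOn dX) (hdY : IsMetricOn dY)
    (hμX : IsPMF μX) (hμY : IsPMF μY) (hμW : IsPMF μW)
    (hμXpos : ∀ x, 0 < μX x) (hμYpos : ∀ y, 0 < μY y) :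
    0 ≤ dGWbi dX μX dY μY ∧
    dGWbi dX μX dY μY = dGWbi dY μY dX μX ∧
    dGWbi dX μX dY μY ≤ dGWbi dX μX dW μW + dGWbi dW μW dY μY ∧
    (dGWbi dX μX dY μY = 0 ↔
      ∃ ψ : X ≃ Y, (∀ x x', dY (ψ x) (ψ x') = dX x x') ∧ (∀ x, μY (ψ x) = μX x)) := by
  obtain ⟨γ, γ', hγ, hγ', hopt⟩ := exists_gwCost_eq_dGWbi (dX := dX) (dY := dY) hμX hμY
  have hnonneg : 0 ≤ dGWbi dX μX dY μY := hopt ▸ gwCost_nonneg hγ.1 hγ'.1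
  refine ⟨hnonneg, dGWbi_comm hμX hμY, dGWbi_triangle hμX hμY hμW,
    fun h0 => exists_iso_of_gwCost_eq_zero hdX hdY hμXpos hμYpos hγ hγ' (hopt.trans h0), ?_⟩
  rintro ⟨ψ, hψd, hψμ⟩
  classical
  have hψ := isCoupling_pi_single ψ (fun x => (hμXpos x).le) hψμ
  refine le_antisymm ?_ hnonneg
  calc dGWbi dX μX dY μY ≤ gwCost dX dY _ _ := dGWbi_le_gwCost hψ hψ
    _ = 0 := by simp [gwCost_pi_single, hψd]

theorem dGWbi_metric {X Y W : Type*} [Fintype X] [Fintype Y] [Fintype W]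
    (dX : X → X → ℝ) (μX : X → ℝ) (dY : Y → Y → ℝ) (μY : Y → ℝ)
    (dW : W → W → ℝ) (μW : W → ℝ)
    (hdX : IsMetricOn dX) (hdY : IsMetricOn dY) (hdW : IsMetricOn dW)
    (hμX : IsPMF μX) (hμY : IsPMF μY) (hμW : IsPMF μW)
    (hμXpos : ∀ x, 0 < μX x) (hμYpos : ∀ y, 0 < μY y) (hμWpos : ∀ w, 0 < μW w) :
    0 ≤ dGWbi dX μX dY μY ∧
    dGWbi dX μX dY μY = dGWbi dY μY dX μX ∧
    dGWbi dX μX dY μY ≤ dGWbi dX μX dW μW + dGWbi dW μW dY μY ∧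
    (dGWbi dX μX dY μY = 0 ↔
      ∃ ψ : X ≃ Y, (∀ x x', dY (ψ x) (ψ x') = dX x x') ∧ (∀ x, μY (ψ x) = μX x)) :=
  dGWbi_metric_general dX μX dY μY dW μW hdX hdY hμX hμY hμW hμXpos hμYpos

end WLGW
end
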